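/- If two graphs G and G' on {1,...,n} are switching equivalent, then their doubled graphs G̃ and G̃' are isomorphic as unlabeled graphs. -/

import Mathlib

open SimpleGraph

/-- `c` is an `n`-rainbow coloring of `G`: every color appears exactly once in the
open neighborhood of each vertex. -/
def IsRainbow {V : Type*} {n : ℕ} (G : SimpleGraph V) (c : V → Fin n) : Prop :=
  ∀ v : V, ∀ i : Fin n, ∃! w : V, G.Adj v w ∧ c w = i

/-- Switching `G` at the vertex `v`: reverse the adjacency between `v` and all other
vertices. -/
def switch {V : Type*} (G : SimpleGraph V) (v : V) : SimpleGraph V :=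
  SimpleGraph.fromRel (fun x y => Xor' (G.Adj x y) (x = v ∨ y = v))

/-- The double `G̃` of `G`: vertices `inl i` (= `i`) and `inr i` (= `i'`), with edges
`(i,i')`; `(i,j)` and `(i',j')` for edges `(i,j)` of `G`; and `(i,j')`, `(i',j)` for
non-edges `i ≠ j` of `G`. -/
def double {V : Type*} (G : SimpleGraph V) : SimpleGraph (V ⊕ V) :=
  SimpleGraph.fromRel (fun x y =>
    match x, y with
    | .inl i, .inl j => G.Adj i j
    | .inr i, .inr j => G.Adj i j
    | .inl i, .inr j => i = j ∨ ¬ G.Adj i j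
    | .inr i, .inl j => i = j ∨ ¬ G.Adj i j)

open Classical in
/-- The Seidel matrix of `G`: zero diagonal, `1` for edges, `-1` for non-edges. -/
noncomputable def seidel {V : Type*} (G : SimpleGraph V) : Matrix V V ℝ :=
  fun i j => if i = j then 0 else if G.Adj i j then 1 else -1

/-- A Seidel matrix: symmetric, zero diagonal, off-diagonal entries `±1`. -/
def IsSeidel {m : Type*} (A : Matrix m m ℝ) : Prop :=
  A.IsSymm ∧ (∀ i, A i i = 0) ∧ ∀ i j, i ≠ j → A i j = 1 ∨ A i j = -1

/-- A permutation matrix. -/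
def IsPermMatrix {m : Type*} [DecidableEq m] (P : Matrix m m ℝ) : Prop :=
  ∃ σ : Equiv.Perm m, P = σ.permMatrix ℝ

/-- A line (row or column) with exactly one nonzero entry, equal to `±1`. -/
def SignedPermLine {m : Type*} (r : m → ℝ) : Prop :=
  ∃ j, (r j = 1 ∨ r j = -1) ∧ ∀ k, k ≠ j → r k = 0

/-- A line with either exactly one nonzero entry `±1`, or exactly two nonzero entries,
each `±1/2`. -/
def HalfLine {m : Type*} (r : m → ℝ) : Prop :=
  SignedPermLine r ∨
    ∃ j k, j ≠ k ∧ (r j = 1/2 ∨ r j = -1/2) ∧ (r k = 1/2 ∨ r k = -1/2) ∧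
      ∀ l, l ≠ j → l ≠ k → r l = 0

/-- A signed permutation matrix: exactly one nonzero entry, `±1`, in every row and column. -/
def IsSignedPermMatrix {m : Type*} (Q : Matrix m m ℝ) : Prop :=
  (∀ i, SignedPermLine (Q i)) ∧ (∀ j, SignedPermLine (fun i => Q i j))

/-- A signed half-permutation matrix. -/
def IsSignedHalfPermMatrix {m : Type*} (S : Matrix m m ℝ) : Prop :=
  (∀ i, HalfLine (S i)) ∧ (∀ j, HalfLine (fun i => S i j))

/-- `T` is an integration of the signed half-permutation matrix `S`. -/
def IsIntegration {m : Type*} (T S : Matrix m m ℝ) : Prop :=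
  IsSignedPermMatrix T ∧
    ∀ i j, ((S i j = 1 ∨ S i j = -1) → T i j = S i j) ∧
      ((S i j = 1/2 ∨ S i j = -1/2) → T i j = 2 * S i j ∨ T i j = 0) ∧
      (S i j = 0 → T i j = 0)

/-- Labeled switching equivalence: a sequence of switchings transforms `G` into `G'`. -/
def SwitchEquiv {V : Type*} (G G' : SimpleGraph V) : Prop :=
  Relation.ReflTransGen (fun H H' => ∃ v, H' = switch H v) G G'

/-- Switching equivalence allowing relabeling. -/
def SwitchEquivIso {V : Type*} (G G' : SimpleGraph V) : Prop :=
  ∃ H, SwitchEquiv G H ∧ Nonempty (H ≃g G')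

/-- The subgraph of `G` consisting of all edges whose endpoints get the same color. -/
def sameColorSubgraph {V : Type*} {n : ℕ} (G : SimpleGraph V) (c : V → Fin n) :
    G.Subgraph where
  verts := Set.univ
  Adj a b := G.Adj a b ∧ c a = c b
  adj_sub h := h.1
  edge_vert _ := Set.mem_univ _
  symm := ⟨fun a b h => ⟨h.1.symm, h.2.symm⟩⟩

/-- The `2n × 2n` block matrix `M̃ = [[M, I−M],[I−M, M]]`. -/
def tildeMat {n : ℕ} (M : Matrix (Fin n) (Fin n) ℝ) :
    Matrix (Fin n ⊕ Fin n) (Fin n ⊕ Fin n) ℝ :=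
  Matrix.fromBlocks M (1 - M) (1 - M) M

variable {V : Type*}

section DoubleAdj

variable (G : SimpleGraph V) (i j : V)

@[simp] lemma double_adj_inl_inl : (double G).Adj (.inl i) (.inl j) ↔ G.Adj i j := by
  simpa [double, G.adj_comm j i] using G.ne_of_adj

@[simp] lemma double_adj_inr_inr : (double G).Adj (.inr i) (.inr j) ↔ G.Adj i j := by
  simpa [double, G.adj_comm j i] using G.ne_of_adj

@[simp] lemma double_adj_inl_inr : (double G).Adj (.inl i) (.inr j) ↔ i = j ∨ ¬ G.Adj i j := by
  simp [double, G.adj_comm j i, eq_comm (a := j)]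

@[simp] lemma double_adj_inr_inl : (double G).Adj (.inr i) (.inl j) ↔ i = j ∨ ¬ G.Adj i j := by
  simp [double, G.adj_comm j i, eq_comm (a := j)]

end DoubleAdj

section SwitchAdj

variable {G : SimpleGraph V} {v x y : V}

lemma switch_adj : (switch G v).Adj x y ↔ x ≠ y ∧ Xor (G.Adj x y) (x = v ∨ y = v) := by
  have : (switch G v).Adj x y ↔
      x ≠ y ∧ (Xor (G.Adj x y) (x = v ∨ y = v) ∨ Xor (G.Adj y x) (y = v ∨ x = v)) := Iff.rfl
  rw [this, G.adj_comm y x, or_comm (a := y = v), or_self]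

lemma switch_adj_of_ne (hx : x ≠ v) (hy : y ≠ v) : (switch G v).Adj x y ↔ G.Adj x y := by
  simpa [switch_adj, hx, hy, xor_def] using G.ne_of_adj

lemma switch_adj_left (hy : y ≠ v) : (switch G v).Adj v y ↔ ¬ G.Adj v y := by
  simp [switch_adj, hy.symm, xor_def]

lemma switch_adj_right (hx : x ≠ v) : (switch G v).Adj x v ↔ ¬ G.Adj x v := by
  simp [switch_adj, hx, xor_def]

end SwitchAdj

/-- Exchanging the two copies `v`, `v'` of a vertex turns every edge `vj` of `G̃` into `v'j`
and vice versa, which is precisely switching `G` at `v`. -/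
def doubleIsoDoubleSwitch [DecidableEq V] (G : SimpleGraph V) (v : V) :
    double G ≃g double (switch G v) where
  toEquiv := Equiv.swap (.inl v) (.inr v)
  map_rel_iff' := by
    rintro (i | i) (j | j) <;>
      rcases eq_or_ne i v with hi | hi <;> rcases eq_or_ne j v with hj | hj <;>
      subst_vars <;>
      simp [*, Ne.symm, Equiv.swap_apply_of_ne_of_ne, switch_adj_of_ne, switch_adj_left,
        switch_adj_right]

/-- switching equivalent graphs have isomorphic doubles. -/
theorem switchEquiv_double_iso {n : ℕ} (G G' : SimpleGraph (Fin n))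
    (h : SwitchEquiv G G') : Nonempty (double G ≃g double G') := by
  induction h with
  | refl => exact ⟨.refl⟩
  | tail _ hstep ih =>
    obtain ⟨v, rfl⟩ := hstep
    obtain ⟨e⟩ := ih
    exact ⟨e.trans (doubleIsoDoubleSwitch _ v)⟩
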